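/- Let L be an opetopic directed complex which is atomic of dimension m with m-dimensional basis element h. Then for every integer q with 0 ≤ q < m, the q-dimensional basis elements of L are precisely the basis elements occurring in the support of (∂⁻)^{m−q}h together with the basis elements ∂⁺a for a ranging over the terms of (∂⁻)^{m−q−1}h; equivalently, the q-dimensional basis elements of L are exactly the terms of g_q^−(⟨L⟩). -/

import Mathlib

open Finsupp

/-- A free augmented directed complex, encoded by its distinguished graded basis:
`B` is the set of basis elements, `dim` the dimension function, `bd a` the boundary
chain of a basis element `a`, and `eps` the augmentation (supported in dimension 0). -/
structure FADC where
  B : Type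
  dim : B → ℕ
  bd : B → (B →₀ ℤ)
  eps : B → ℤ
  bd_dim : ∀ a b, b ∈ (bd a).support → dim b + 1 = dim a
  eps_dim : ∀ b, 0 < dim b → eps b = 0
  bd_bd : ∀ a : B, ((bd a).sum fun b n => n • bd b) = 0
  eps_bd : ∀ a : B, ((bd a).sum fun b n => n * eps b) = 0

namespace FADC

variable (K : FADC)

/-- The boundary homomorphism `∂`, extended to chains. -/
noncomputable def bdc (c : K.B →₀ ℤ) : K.B →₀ ℤ := c.sum fun b n => n • K.bd b

/-- The augmentation `ε`, extended to chains. -/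
noncomputable def epsc (c : K.B →₀ ℤ) : ℤ := c.sum fun b n => n * K.eps b

/-- `∂⁺c`, the positive part of `∂c`. -/
noncomputable def bdp (c : K.B →₀ ℤ) : K.B →₀ ℤ := (K.bdc c).mapRange (fun n => max n 0) (by simp)

/-- `∂⁻c`, the negative part of `∂c`. -/
noncomputable def bdm (c : K.B →₀ ℤ) : K.B →₀ ℤ := (-K.bdc c).mapRange (fun n => max n 0) (by simp)

/-- `K` is unital if `ε((∂⁻)^q a) = ε((∂⁺)^q a) = 1` for every `q`-dimensional
basis element `a`. -/
def Unital : Prop := ∀ a : K.B,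
  K.epsc (K.bdm^[K.dim a] (Finsupp.single a 1)) = 1 ∧
  K.epsc (K.bdp^[K.dim a] (Finsupp.single a 1)) = 1

/-- `K` is loop-free if its basis elements admit a (strict) partial order such that
for every basis element `a` and every `r > 0`, the basis elements occurring in
`(∂⁻)^r a` strictly precede those occurring in `(∂⁺)^r a`. -/
def LoopFree : Prop :=
  ∃ lt : K.B → K.B → Prop, IsStrictOrder K.B lt ∧
    ∀ (a : K.B) (r : ℕ), 0 < r →
      ∀ b ∈ (K.bdm^[r] (Finsupp.single a 1)).support,
        ∀ b' ∈ (K.bdp^[r] (Finsupp.single a 1)).support, lt b b'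

/-- `K` is atomic of dimension `n`. -/
def Atomic (n : ℕ) : Prop :=
  (∀ b : K.B, K.dim b ≤ n) ∧
  (∃! g : K.B, K.dim g = n) ∧
  (∀ b : K.B, K.dim b < n → ∃ a : K.B, K.dim b < K.dim a ∧
    (b ∈ (K.bdm (Finsupp.single a 1)).support ∨ b ∈ (K.bdp (Finsupp.single a 1)).support))

/-- `g_q^α(x)`: given `x_q^- = xq` and `x_{q+1}^α = c`, this is
`x_q^- + ∂⁺a_1 + … + ∂⁺a_k` where `a_1, …, a_k` are the terms of `c`. -/
noncomputable def gch (xq c : K.B →₀ ℤ) : K.B →₀ ℤ :=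
  xq + c.sum fun b n => n • K.bdp (Finsupp.single b 1)

/-- The negative chains `⟨K⟩_q^- = (∂⁻)^{n-q} g` of the canonical atom. -/
noncomputable def atomNeg (g : K.B) (n q : ℕ) : K.B →₀ ℤ :=
  if q ≤ n then K.bdm^[n - q] (Finsupp.single g 1) else 0

/-- The positive chains `⟨K⟩_q^+ = (∂⁺)^{n-q} g` of the canonical atom. -/
noncomputable def atomPos (g : K.B) (n q : ℕ) : K.B →₀ ℤ :=
  if q ≤ n then K.bdp^[n - q] (Finsupp.single g 1) else 0

end FADC

/-- Membership in `νK`: the double sequence `(x_0^-, x_0^+ | x_1^-, x_1^+ | …)`,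
given by `xm` and `xp`, is a member of `νK`. -/
structure NuMem (K : FADC) (xm xp : ℕ → (K.B →₀ ℤ)) : Prop where
  dim_m : ∀ q, ∀ b ∈ (xm q).support, K.dim b = q
  dim_p : ∀ q, ∀ b ∈ (xp q).support, K.dim b = q
  nonneg_m : ∀ q b, 0 ≤ xm q b
  nonneg_p : ∀ q b, 0 ≤ xp q b
  fin : ∃ n, ∀ q, n < q → xm q = 0 ∧ xp q = 0
  eps_m : K.epsc (xm 0) = 1
  eps_p : K.epsc (xp 0) = 1
  bd_m : ∀ q, K.bdc (xm (q + 1)) = xp q - xm q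
  bd_p : ∀ q, K.bdc (xp (q + 1)) = xp q - xm q

/-- `K` together with the class `thin` of thin basis elements is an
`n`-dimensional opetopic directed complex. -/
structure IsODC (K : FADC) (thin : K.B → Prop) (n : ℕ) : Prop where
  atomic : K.Atomic n
  loopFree : K.LoopFree
  unital : K.Unital
  thin_pos : ∀ b, thin b → 0 < K.dim b
  bdp_basis : ∀ b : K.B, 0 < K.dim b →
    ∃ a : K.B, ¬ thin a ∧ K.bdp (Finsupp.single b 1) = Finsupp.single a 1
  bdm_thin : ∀ b : K.B, thin b →
    ∃ a : K.B, ¬ thin a ∧ K.bdm (Finsupp.single b 1) = Finsupp.single a 1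

/-- An opetopic directed complex is reduced if every thin basis element is `∂⁻a`
for some other basis element `a`. -/
def ODCReduced (K : FADC) (thin : K.B → Prop) : Prop :=
  ∀ b, thin b → ∃ a, a ≠ b ∧ K.bdm (Finsupp.single a 1) = Finsupp.single b 1

/-- A network: finite sets of edges and vertices with partially defined source and
target functions; input edges are those with no source, output edges those with no
target. -/
structure Network where
  E : Type
  V : Type
  finE : Finite E
  finV : Finite V
  src : E → Option V
  tgt : E → Option V

namespace Network

variable (N : Network)

/-- One step of a path: the target of `e` is the source of `e'`. -/
def step (e e' : N.E) : Prop := ∃ v : N.V, N.tgt e = some v ∧ N.src e' = some v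

/-- There is a path from `e` to `e'`. -/
def PathTo (e e' : N.E) : Prop := Relation.ReflTransGen N.step e e'

/-- A network is acyclic if there is no nontrivial path from an edge to itself. -/
def Acyclic : Prop := ∀ e : N.E, ¬ Relation.TransGen N.step e e

/-- A network is linear if it is acyclic and consists of a single path
`e_0, v_1, e_1, …, v_k, e_k`. -/
def Linear : Prop := N.Acyclic ∧
  ∃ (k : ℕ) (e : Fin (k + 1) ≃ N.E) (v : Fin k ≃ N.V),
    N.src (e 0) = none ∧ N.tgt (e (Fin.last k)) = none ∧
    ∀ i : Fin k, N.tgt (e i.castSucc) = some (v i) ∧ N.src (e i.succ) = some (v i)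

/-- A network is confluent if it is acyclic, has a unique output edge, and every
vertex is the source of exactly one edge and the target of at least one edge. -/
def Confluent : Prop := N.Acyclic ∧ (∃! e : N.E, N.tgt e = none) ∧
  (∀ v : N.V, ∃! e : N.E, N.src e = some v) ∧ (∀ v : N.V, ∃ e : N.E, N.tgt e = some v)

end Network

/-- An opetopic network: an acyclic network with a unique output edge, together with
thin edges (which are inputs) and thin vertices (each the target of exactly one edge,
which is not thin). -/
structure OpetopicNetwork extends Network where
  thinE : E → Prop
  thinV : V → Prop
  acyclic : toNetwork.Acyclic
  out_unique : ∃! e : E, tgt e = none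
  thinE_input : ∀ e, thinE e → src e = none
  thinV_unique : ∀ v, thinV v → ∃! e, tgt e = some v
  thinV_nonthin : ∀ v e, thinV v → tgt e = some v → ¬ thinE e

/-- An opetopic network is reduced if every thin edge has a target vertex which is
the target of no other edge. -/
def OpetopicNetwork.Reduced (N : OpetopicNetwork) : Prop :=
  ∀ e, N.thinE e → ∃ v, N.tgt e = some v ∧ ∀ e', N.tgt e' = some v → e' = e

/-- `c` is a constellation from `N` to `P`: a bijection from the vertices of `N` to
the input edges of `P`, preserving thinness, such that for every edge `e` of `P`
there is exactly one edge of `N` with a source but not a target in the preimage of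
`I_e` (the input edges of `P` from which there is a path to `e`). -/
def IsConstellation (N P : OpetopicNetwork) (c : N.V → P.E) : Prop :=
  (∀ v, P.src (c v) = none) ∧
  Function.Injective c ∧
  (∀ e : P.E, P.src e = none → ∃ v, c v = e) ∧
  (∀ v, N.thinV v ↔ P.thinE (c v)) ∧
  (∀ e : P.E, ∃! e' : N.E,
    (∃ v, N.src e' = some v ∧ P.toNetwork.PathTo (c v) e) ∧
    ¬ (∃ v, N.tgt e' = some v ∧ P.toNetwork.PathTo (c v) e))

/-- An `n`-dimensional opetopic sequence `N_0 → N_1 → … → N_n`. -/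
structure OpetopicSequence (n : ℕ) where
  N : Fin (n + 1) → OpetopicNetwork
  c : ∀ q : Fin n, (N q.castSucc).V → (N q.succ).E
  constell : ∀ q : Fin n, IsConstellation (N q.castSucc) (N q.succ) (c q)
  linear0 : (N 0).toNetwork.Linear
  noThin0 : ∀ e, ¬ (N 0).thinE e
  top_single : ∃! _e : (N (Fin.last n)).E, True
  top_noV : IsEmpty (N (Fin.last n)).V

/-- An isomorphism of opetopic sequences: families of bijections on edges and
vertices preserving sources, targets, thin edges and thin vertices, and commuting
with the constellations. -/
def SeqIso (n : ℕ) (S S' : OpetopicSequence n) : Prop :=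
  ∃ (fE : ∀ q : Fin (n + 1), (S.N q).E ≃ (S'.N q).E)
    (fV : ∀ q : Fin (n + 1), (S.N q).V ≃ (S'.N q).V),
    (∀ q : Fin (n + 1),
      (∀ e v, (S.N q).src e = some v ↔ (S'.N q).src (fE q e) = some (fV q v)) ∧
      (∀ e v, (S.N q).tgt e = some v ↔ (S'.N q).tgt (fE q e) = some (fV q v)) ∧
      (∀ e, (S.N q).thinE e ↔ (S'.N q).thinE (fE q e)) ∧
      (∀ v, (S.N q).thinV v ↔ (S'.N q).thinV (fV q v))) ∧
    (∀ q : Fin n, ∀ v, fE q.succ (S.c q v) = S'.c q (fV q.castSucc v))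

/-- The opetopic sequence `S` realizes the sequence
`G_0^-(⟨K⟩) → … → G_n^-(⟨K⟩)` associated to the opetopic directed complex `K`
(with top basis element `g` and thin elements `thin`): the edges of `S.N q`
correspond bijectively to the terms of `g_q^-(⟨K⟩)`, the vertices to the terms of
`⟨K⟩_{q+1}^-`, sources, targets and thinness are as prescribed by `∂⁺`, `∂⁻` and
`thin`, and the constellations are the identity correspondences. -/
def RealizedBy (K : FADC) (thin : K.B → Prop) (n : ℕ) (g : K.B)
    (S : OpetopicSequence n) : Prop :=
  ∃ (eE : ∀ q : Fin (n + 1), (S.N q).E → K.B)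
    (eV : ∀ q : Fin (n + 1), (S.N q).V → K.B),
    (∀ q : Fin (n + 1),
      Function.Injective (eE q) ∧
      (∀ ed, eE q ed ∈ (K.gch (K.atomNeg g n q.1) (K.atomNeg g n (q.1 + 1))).support) ∧
      (∀ b ∈ (K.gch (K.atomNeg g n q.1) (K.atomNeg g n (q.1 + 1))).support,
        ∃ ed, eE q ed = b) ∧
      Function.Injective (eV q) ∧
      (∀ v, eV q v ∈ (K.atomNeg g n (q.1 + 1)).support) ∧
      (∀ b ∈ (K.atomNeg g n (q.1 + 1)).support, ∃ v, eV q v = b) ∧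
      (∀ ed v, (S.N q).src ed = some v ↔
        eE q ed ∈ (K.bdp (Finsupp.single (eV q v) 1)).support) ∧
      (∀ ed v, (S.N q).tgt ed = some v ↔
        eE q ed ∈ (K.bdm (Finsupp.single (eV q v) 1)).support) ∧
      (∀ ed, (S.N q).thinE ed ↔ thin (eE q ed)) ∧
      (∀ v, (S.N q).thinV v ↔ thin (eV q v))) ∧
    (∀ q : Fin n, ∀ v, eE q.succ (S.c q v) = eV q.castSucc v)

/-- A bundled `n`-dimensional opetopic directed complex. -/
structure ODCBundle (n : ℕ) where
  K : FADC
  thin : K.B → Prop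
  g : K.B
  dim_g : K.dim g = n
  isODC : IsODC K thin n

/-- Isomorphism of (bundled) opetopic directed complexes: a dimension- and
thinness-preserving bijection of bases commuting with boundaries and augmentations. -/
def ODCIso {n : ℕ} (A A' : ODCBundle n) : Prop :=
  ∃ φ : A.K.B ≃ A'.K.B,
    (∀ b, A'.K.dim (φ b) = A.K.dim b) ∧
    (∀ b, A'.thin (φ b) ↔ A.thin b) ∧
    (∀ b, A'.K.bd (φ b) = Finsupp.equivMapDomain φ (A.K.bd b)) ∧
    (∀ b, A'.K.eps (φ b) = A.K.eps b)


/-!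
Write `X r = (∂⁻)^r h`. By induction on `r`, every basis element `b` of dimension `m - r - 1`
is a term of `g(X (r+1), X r) = X (r+1) + Σ_{a ∈ X r} ∂⁺a`. Atomicity puts `b` in `∂a` for some
`a` one dimension higher, which by induction is a term of `X r` or is `∂⁺a'` for a term `a'` of
`X (r-1)`. In the first case `b` lies in `∂⁺a`, or in `∂⁻a`, where it either survives in
`∂⁻(X r) = X (r+1)` or is cancelled by some `∂⁺a₂` with `a₂` in `X r`. In the second case
`∂a = ∂∂⁺a' = ∂∂⁻a'`, so `b` lies in `∂d` for a term `d` of `∂⁻a'`; this `d` is again of the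
first kind or the second, and it strictly precedes `a` in the loop-free order, so the descent
stops because the candidates form a finite set.
-/

namespace FADC

variable (K : FADC)

theorem bdc_eq_linearCombination (c : K.B →₀ ℤ) : K.bdc c = linearCombination ℤ K.bd c :=
  (linearCombination_apply ℤ c).symm

theorem bdc_single (a : K.B) : K.bdc (single a 1) = K.bd a := by
  simp [bdc]

theorem bdc_apply (c : K.B →₀ ℤ) (b : K.B) : K.bdc c b = c.sum fun a n => n * K.bd a b := by
  simp [bdc, Finsupp.sum_apply]

theorem bdc_bdc (c : K.B →₀ ℤ) : K.bdc (K.bdc c) = 0 := by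
  have hbd : (fun a => linearCombination ℤ K.bd (K.bd a)) = 0 :=
    funext fun a => (linearCombination_apply ℤ _).trans (K.bd_bd a)
  rw [bdc_eq_linearCombination, bdc_eq_linearCombination, linearCombination_linearCombination,
    hbd, linearCombination_zero, LinearMap.zero_apply]

theorem bdp_apply (c : K.B →₀ ℤ) (b : K.B) : K.bdp c b = max (K.bdc c b) 0 :=
  mapRange_apply ..

theorem bdm_apply (c : K.B →₀ ℤ) (b : K.B) : K.bdm c b = max (-K.bdc c b) 0 :=
  mapRange_apply ..

theorem bdp_nonneg (c : K.B →₀ ℤ) (b : K.B) : 0 ≤ K.bdp c b := by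
  simp [bdp_apply]

theorem bdm_nonneg (c : K.B →₀ ℤ) (b : K.B) : 0 ≤ K.bdm c b := by
  simp [bdm_apply]

theorem mem_support_bdp_iff {c : K.B →₀ ℤ} {b : K.B} : b ∈ (K.bdp c).support ↔ 0 < K.bdc c b := by
  rw [mem_support_iff, bdp_apply]; omega

theorem mem_support_bdm_iff {c : K.B →₀ ℤ} {b : K.B} : b ∈ (K.bdm c).support ↔ K.bdc c b < 0 := by
  rw [mem_support_iff, bdm_apply]; omega

theorem bdp_sub_bdm (c : K.B →₀ ℤ) : K.bdp c - K.bdm c = K.bdc c := by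
  ext b
  rw [Finsupp.sub_apply, bdp_apply, bdm_apply]
  omega

theorem bdc_bdp_eq_bdc_bdm (c : K.B →₀ ℤ) : K.bdc (K.bdp c) = K.bdc (K.bdm c) := by
  have h : K.bdc (K.bdp c - K.bdm c) = 0 := by rw [bdp_sub_bdm, bdc_bdc]
  rw [bdc_eq_linearCombination, map_sub, sub_eq_zero] at h
  simpa only [bdc_eq_linearCombination] using h

theorem dim_add_one_of_bd_ne_zero {a b : K.B} (h : K.bd a b ≠ 0) : K.dim b + 1 = K.dim a :=
  K.bd_dim a b (mem_support_iff.mpr h)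

theorem exists_mem_support_bd_ne_zero {c : K.B →₀ ℤ} {b : K.B} (h : K.bdc c b ≠ 0) :
    ∃ a ∈ c.support, K.bd a b ≠ 0 := by
  rw [bdc_apply] at h
  obtain ⟨a, ha, hab⟩ := Finset.exists_ne_zero_of_sum_ne_zero h
  exact ⟨a, ha, right_ne_zero_of_mul hab⟩

theorem mem_support_bdm_or_exists_bd_pos {c : K.B →₀ ℤ} (hc : ∀ b, 0 ≤ c b) {a b : K.B}
    (ha : a ∈ c.support) (hab : K.bd a b < 0) :
    b ∈ (K.bdm c).support ∨ ∃ a' ∈ c.support, 0 < K.bd a' b := by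
  classical
  by_contra! hcon
  obtain ⟨hbdm, hpos⟩ := hcon
  have hca : 0 < c a := (hc a).lt_of_ne' (mem_support_iff.mp ha)
  have hsum : K.bdc c b < 0 := by
    rw [bdc_apply, Finsupp.sum, ← Finset.add_sum_erase _ _ ha]
    have hrest : ∑ x ∈ c.support.erase a, c x * K.bd x b ≤ 0 :=
      Finset.sum_nonpos fun x hx =>
        mul_nonpos_of_nonneg_of_nonpos (hc x) (hpos x (Finset.mem_of_mem_erase hx))
    nlinarith
  exact hbdm (K.mem_support_bdm_iff.mpr hsum)

theorem gch_apply (x c : K.B →₀ ℤ) (b : K.B) :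
    K.gch x c b = x b + ∑ a ∈ c.support, c a * max (K.bd a b) 0 := by
  simp [gch, Finsupp.sum, bdp_apply, bdc_single]

theorem mem_support_gch_iff {x c : K.B →₀ ℤ} (hx : ∀ b, 0 ≤ x b) (hc : ∀ b, 0 ≤ c b)
    {b : K.B} : b ∈ (K.gch x c).support ↔ b ∈ x.support ∨ ∃ a ∈ c.support, 0 < K.bd a b := by
  have hterm : ∀ a ∈ c.support, 0 ≤ c a * max (K.bd a b) 0 :=
    fun a _ => mul_nonneg (hc a) (le_max_right _ _)
  have hpos : ∀ a ∈ c.support, 0 < c a * max (K.bd a b) 0 ↔ 0 < K.bd a b := fun a ha => by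
    rw [mul_pos_iff_of_pos_left ((hc a).lt_of_ne' (mem_support_iff.mp ha))]
    exact lt_max_iff.trans (or_iff_left (lt_irrefl 0))
  have hsum := Finset.sum_nonneg hterm
  rw [mem_support_iff, gch_apply, mem_support_iff, ← Finset.sum_pos_iff_of_nonneg hterm |>.trans
    (exists_congr fun a => and_congr_right (hpos a))]
  have := hx b
  omega

theorem mem_support_gch_bdm {c : K.B →₀ ℤ} (hc : ∀ b, 0 ≤ c b) {a b : K.B}
    (ha : a ∈ c.support) (hab : K.bd a b ≠ 0) : b ∈ (K.gch (K.bdm c) c).support := by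
  rw [K.mem_support_gch_iff (K.bdm_nonneg c) hc]
  rcases hab.lt_or_gt with hneg | hpos
  · exact K.mem_support_bdm_or_exists_bd_pos hc ha hneg
  · exact Or.inr ⟨a, ha, hpos⟩

theorem iterate_bdm_nonneg (h : K.B) (r : ℕ) (b : K.B) : 0 ≤ (K.bdm^[r] (single h 1)) b := by
  cases r with
  | zero => classical rw [Function.iterate_zero_apply, single_apply]; split <;> omega
  | succ r => rw [Function.iterate_succ_apply']; exact K.bdm_nonneg _ b

theorem dim_add_of_mem_support_iterate_bdm {h : K.B} {r : ℕ} {b : K.B}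
    (hb : b ∈ (K.bdm^[r] (single h 1)).support) : K.dim b + r = K.dim h := by
  induction r generalizing b with
  | zero => simp_all
  | succ r ih =>
    rw [Function.iterate_succ_apply', mem_support_bdm_iff] at hb
    obtain ⟨a, ha, hab⟩ := K.exists_mem_support_bd_ne_zero hb.ne
    have := K.dim_add_one_of_bd_ne_zero hab
    have := ih ha
    omega

theorem dim_add_of_mem_support_gch {h : K.B} {r : ℕ} {b : K.B}
    (hb : b ∈ (K.gch (K.bdm^[r + 1] (single h 1)) (K.bdm^[r] (single h 1))).support) :
    K.dim b + (r + 1) = K.dim h := by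
  rcases (K.mem_support_gch_iff (K.iterate_bdm_nonneg h _) (K.iterate_bdm_nonneg h _)).mp hb
    with hb | ⟨a, ha, hab⟩
  · exact K.dim_add_of_mem_support_iterate_bdm hb
  · have := K.dim_add_one_of_bd_ne_zero hab.ne'
    have := K.dim_add_of_mem_support_iterate_bdm ha
    omega

variable {K}

theorem Atomic.exists_bd_ne_zero {n : ℕ} (hK : K.Atomic n) {b : K.B} (hb : K.dim b < n) :
    ∃ a, K.bd a b ≠ 0 := by
  obtain ⟨a, -, hab⟩ := hK.2.2 b hb
  refine ⟨a, fun h0 => ?_⟩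
  rcases hab with hab | hab
  · rw [mem_support_bdm_iff, bdc_single] at hab; omega
  · rw [mem_support_bdp_iff, bdc_single] at hab; omega

end FADC

namespace IsODC

open FADC

variable {L : FADC} {thin : L.B → Prop} {m : ℕ}

theorem single_eq_bdp_iff (hL : IsODC L thin m) {a : L.B} (ha : 0 < L.dim a) (b : L.B) :
    single b 1 = L.bdp (single a 1) ↔ 0 < L.bd a b := by
  obtain ⟨a₀, -, he⟩ := hL.bdp_basis a ha
  rw [he, ← bdc_single, ← mem_support_bdp_iff, he, support_single _ one_ne_zero,
    Finset.mem_singleton]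
  exact (single_left_injective one_ne_zero).eq_iff

theorem bd_eq_bdc_bdm (hL : IsODC L thin m) {a a' : L.B} (ha' : 0 < L.dim a')
    (haa' : 0 < L.bd a' a) : L.bd a = L.bdc (L.bdm (single a' 1)) := by
  rw [← bdc_single, (hL.single_eq_bdp_iff ha' a).mpr haa', bdc_bdp_eq_bdc_bdm]

theorem mem_support_gch_succ (hL : IsODC L thin m) (h : L.B) (r : ℕ)
    (hlevel : ∀ d, L.dim d + (r + 1) = L.dim h →
      d ∈ (L.gch (L.bdm^[r + 1] (single h 1)) (L.bdm^[r] (single h 1))).support)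
    {a : L.B} (ha : a ∈ (L.gch (L.bdm^[r + 1] (single h 1)) (L.bdm^[r] (single h 1))).support)
    (b : L.B) (hab : L.bd a b ≠ 0) :
    b ∈ (L.gch (L.bdm^[r + 2] (single h 1)) (L.bdm^[r + 1] (single h 1))).support := by
  obtain ⟨lt, hlt, hloop⟩ := hL.loopFree
  have hX := L.iterate_bdm_nonneg h
  revert b
  refine Set.WellFoundedOn.induction (P := fun a => ∀ b, L.bd a b ≠ 0 →
      b ∈ (L.gch (L.bdm^[r + 2] (single h 1)) (L.bdm^[r + 1] (single h 1))).support)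
    ((Set.toFinite _).wellFoundedOn (r := lt)) ha fun a ha ih b hab => ?_
  rcases (L.mem_support_gch_iff (hX _) (hX _)).mp ha with haX | ⟨a', ha', ha'a⟩
  · rw [Function.iterate_succ_apply' _ (r + 1)]
    exact L.mem_support_gch_bdm (hX _) haX hab
  · have hdim_a' := L.dim_add_of_mem_support_iterate_bdm ha'
    have hdim_a := L.dim_add_one_of_bd_ne_zero ha'a.ne'
    rw [hL.bd_eq_bdc_bdm (by omega) ha'a] at hab
    obtain ⟨d, hd, hdb⟩ := L.exists_mem_support_bd_ne_zero hab
    have hdim_d := L.dim_add_one_of_bd_ne_zero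
      (by rw [← bdc_single]; exact (L.mem_support_bdm_iff.mp hd).ne)
    refine ih d (hlevel d (by omega)) (hloop a' 1 one_pos d hd a ?_) b hdb
    rwa [Function.iterate_one, mem_support_bdp_iff, bdc_single]

theorem mem_support_gch_of_dim_add (hL : IsODC L thin m) {h : L.B} (hh : L.dim h = m) (r : ℕ)
    {b : L.B} (hb : L.dim b + (r + 1) = m) :
    b ∈ (L.gch (L.bdm^[r + 1] (single h 1)) (L.bdm^[r] (single h 1))).support := by
  induction r generalizing b with
  | zero =>
    obtain ⟨a, hab⟩ := hL.atomic.exists_bd_ne_zero (show L.dim b < m by omega)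
    have hdim_a := L.dim_add_one_of_bd_ne_zero hab
    rw [hL.atomic.2.1.unique (y₁ := a) (by omega) hh] at hab
    rw [Function.iterate_one]
    exact L.mem_support_gch_bdm (L.iterate_bdm_nonneg h 0) (by simp) hab
  | succ r ih =>
    obtain ⟨a, hab⟩ := hL.atomic.exists_bd_ne_zero (show L.dim b < m by omega)
    have hdim_a := L.dim_add_one_of_bd_ne_zero hab
    exact hL.mem_support_gch_succ h r (fun d hd => ih (by omega)) (ih (by omega)) b hab

end IsODC

/-- Section 6: in an opetopic directed complex `L` which is atomic of dimension `m`
with top basis element `h`, for `0 ≤ q < m` the `q`-dimensional basis elements are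
precisely the terms of `(∂⁻)^{m-q} h` together with the basis elements `∂⁺a` for
`a` a term of `(∂⁻)^{m-q-1} h`; equivalently, they are exactly the terms of
`g_q^-(⟨L⟩)`. -/
theorem stmt19 (L : FADC) (thinL : L.B → Prop) (m : ℕ) (hL : IsODC L thinL m)
    (h : L.B) (hh : L.dim h = m) (q : ℕ) (hq : q < m) :
    ∀ b : L.B,
      ((L.dim b = q) ↔
        (b ∈ (L.bdm^[m - q] (Finsupp.single h 1)).support ∨
          ∃ a ∈ (L.bdm^[m - q - 1] (Finsupp.single h 1)).support,
            Finsupp.single b 1 = L.bdp (Finsupp.single a 1))) ∧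
      ((L.dim b = q) ↔
        b ∈ (L.gch (L.bdm^[m - q] (Finsupp.single h 1))
          (L.bdm^[m - q - 1] (Finsupp.single h 1))).support) := by
  intro b
  obtain ⟨r, hr⟩ : ∃ r, m - q = r + 1 := ⟨m - q - 1, by omega⟩
  rw [hr, Nat.add_sub_cancel]
  have hdim : L.dim b = q ↔
      b ∈ (L.gch (L.bdm^[r + 1] (single h 1)) (L.bdm^[r] (single h 1))).support :=
    ⟨fun hb => hL.mem_support_gch_of_dim_add hh r (by omega),
      fun hb => by have := L.dim_add_of_mem_support_gch hb; omega⟩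
  refine ⟨hdim.trans ?_, hdim⟩
  rw [L.mem_support_gch_iff (L.iterate_bdm_nonneg h _) (L.iterate_bdm_nonneg h _)]
  refine or_congr_right (exists_congr fun a => and_congr_right fun ha => ?_)
  have := L.dim_add_of_mem_support_iterate_bdm ha
  exact (hL.single_eq_bdp_iff (by omega) b).symm
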